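/- Let Ω be a relatively compact subset of E with closure contained in {ϱ > 0}, where ϱ : E → [0,∞) is continuous. Then there are constants ϱ⁻, ϱ⁺ ∈ (0,∞) with ϱ⁻ ≤ ϱ ≤ ϱ⁺ on the closure of Ω, and for every ∅ ≠ B ⊂ I with E₊(B) ∩ Ω ≠ ∅ and every f ∈ C²_c(E): ∫_{E₊(B)∩Ω} f² dλ_B^{(n)} + ∫_{E₊(B)∩Ω} |∇^B f|² dλ_B^{(n)} ≤ (β^{n−#B} ϱ⁻)^{-1} · 𝓔₁(f,f), where 𝓔₁(f,f) = 𝓔(f,f) + ‖f‖²_{L²(E;μ)}. -/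

import Mathlib

/-! On the compact set `closure Ω` the continuous density `ϱ` attains a positive minimum `ϱ⁻`.
Hence on `E₊(B) ∩ Ω` the measure `β^(n-#B) ϱ⁻ λ_B` is dominated by `μ_B` restricted to `E₊(B)`,
which is itself dominated by `μ = ϱ m_{n,β}`. Integrating the nonnegative functions `f²` and
`|∇^B f|²` against these two measure inequalities bounds the left-hand side by `‖f‖²_{L²(μ)}` and
by the `B`-term of `𝓔(f,f)`; all integrals are finite because `f ∈ C²_c` and every measure
involved is finite on compacts. -/

open MeasureTheory Set

noncomputable section

def orthE (n : ℕ) : Set (Fin n → ℝ) := {x | ∀ i, 0 ≤ x i}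

def Eplus (n : ℕ) (B : Finset (Fin n)) : Set (Fin n → ℝ) :=
  {x | (∀ i ∈ B, 0 < x i) ∧ (∀ i ∉ B, x i = 0)}

def lamB (n : ℕ) (B : Finset (Fin n)) : Measure (Fin n → ℝ) :=
  Measure.pi fun i => if i ∈ B then volume.restrict (Ici (0 : ℝ)) else Measure.dirac 0

def mMeas (n : ℕ) (β : ℝ) : Measure (Fin n → ℝ) :=
  ∑ B : Finset (Fin n), (ENNReal.ofReal β) ^ (n - B.card) • lamB n B

def muB (n : ℕ) (β : ℝ) (ϱ : (Fin n → ℝ) → ℝ) (B : Finset (Fin n)) :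
    Measure (Fin n → ℝ) :=
  ((ENNReal.ofReal β) ^ (n - B.card) • lamB n B).withDensity fun x => ENNReal.ofReal (ϱ x)

def pd (n : ℕ) (i : Fin n) (f : (Fin n → ℝ) → ℝ) (x : Fin n → ℝ) : ℝ :=
  fderiv ℝ f x (Pi.single i 1)

def energyForm (n : ℕ) (β : ℝ) (ϱ : (Fin n → ℝ) → ℝ) (f : (Fin n → ℝ) → ℝ) : ℝ :=
  ∑ B ∈ Finset.univ.filter (fun B : Finset (Fin n) => B ≠ ∅),
    ∫ x in Eplus n B, (∑ i ∈ B, pd n i f x ^ 2) ∂(muB n β ϱ B)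

open scoped ENNReal

section General

variable {α : Type*} [MeasurableSpace α] {μ ν : Measure α}

theorem integral_le_inv_mul_integral_of_smul_le {c : ℝ} (hc : 0 < c)
    (h : ENNReal.ofReal c • μ ≤ ν) {g : α → ℝ} (hg : 0 ≤ᵐ[ν] g) (hgi : Integrable g ν) :
    ∫ x, g x ∂μ ≤ c⁻¹ * ∫ x, g x ∂ν := by
  rw [le_inv_mul_iff₀ hc]
  calc c * ∫ x, g x ∂μ = ∫ x, g x ∂(ENNReal.ofReal c • μ) := by
        rw [integral_smul_measure, ENNReal.toReal_ofReal hc.le, smul_eq_mul]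
    _ ≤ ∫ x, g x ∂ν := integral_mono_measure h hg hgi

theorem withDensity_mono_measure (h : μ ≤ ν) (f : α → ℝ≥0∞) :
    μ.withDensity f ≤ ν.withDensity f := by
  refine Measure.le_intro fun s hs _ => ?_
  rw [withDensity_apply _ hs, withDensity_apply _ hs]
  exact lintegral_mono' (Measure.restrict_mono subset_rfl h) le_rfl

theorem smul_restrict_le_withDensity_ofReal {s : Set α} (hs : MeasurableSet s) {ϱ : α → ℝ}
    {m : ℝ} (hm : ∀ x ∈ s, m ≤ ϱ x) :
    ENNReal.ofReal m • μ.restrict s ≤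
      (μ.restrict s).withDensity fun x => ENNReal.ofReal (ϱ x) := by
  rw [← withDensity_const]
  refine withDensity_mono ?_
  filter_upwards [ae_restrict_mem hs] with x hx
  exact ENNReal.ofReal_le_ofReal (hm x hx)

theorem IsCompact.exists_bounds_of_continuous_pos {X : Type*} [TopologicalSpace X] {K : Set X}
    (hK : IsCompact K) {ϱ : X → ℝ} (hϱ : Continuous ϱ) (hpos : ∀ x ∈ K, 0 < ϱ x) :
    ∃ m M : ℝ, 0 < m ∧ m ≤ M ∧ ∀ x ∈ K, m ≤ ϱ x ∧ ϱ x ≤ M := by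
  rcases K.eq_empty_or_nonempty with rfl | hne
  · exact ⟨1, 1, one_pos, le_rfl, by simp⟩
  obtain ⟨x₀, hx₀, hmin⟩ := hK.exists_isMinOn hne hϱ.continuousOn
  obtain ⟨x₁, hx₁, hmax⟩ := hK.exists_isMaxOn hne hϱ.continuousOn
  exact ⟨ϱ x₀, ϱ x₁, hpos x₀ hx₀, hmin hx₁, fun x hx => ⟨hmin hx, hmax hx⟩⟩

theorem Continuous.integrable_sq_of_hasCompactSupport {X : Type*} [TopologicalSpace X]
    [MeasurableSpace X] [OpensMeasurableSpace X] {μ : Measure X} [IsFiniteMeasureOnCompacts μ]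
    {g : X → ℝ} (hg : Continuous g) (hgs : HasCompactSupport g) :
    Integrable (fun x => g x ^ 2) μ := by
  have hgs2 : HasCompactSupport fun x => g x ^ 2 :=
    hgs.comp_left (g := fun t : ℝ => t ^ 2) (zero_pow two_ne_zero)
  exact (hg.pow 2).integrable_of_hasCompactSupport hgs2

end General

variable {n : ℕ}

theorem measurableSet_Eplus (B : Finset (Fin n)) : MeasurableSet (Eplus n B) := by
  have h : Eplus n B = (⋂ i ∈ B, {x : Fin n → ℝ | 0 < x i}) ∩
      (⋂ i ∈ (Bᶜ : Finset (Fin n)), {x : Fin n → ℝ | x i = 0}) := by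
    ext x; simp [Eplus]
  rw [h]
  exact (Finset.measurableSet_biInter _ fun i _ =>
      measurableSet_lt measurable_const (measurable_pi_apply i)).inter
    (Finset.measurableSet_biInter _ fun i _ =>
      measurableSet_eq_fun (measurable_pi_apply i) measurable_const)

instance isFiniteMeasureOnCompacts_lamB (B : Finset (Fin n)) :
    IsFiniteMeasureOnCompacts (lamB n B) := by
  have : ∀ i : Fin n, SigmaFinite
      (if i ∈ B then volume.restrict (Ici (0 : ℝ)) else Measure.dirac 0) := by
    intro i; split_ifs <;> infer_instance
  have : ∀ i : Fin n, IsFiniteMeasureOnCompacts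
      (if i ∈ B then volume.restrict (Ici (0 : ℝ)) else Measure.dirac 0) := by
    intro i; split_ifs <;> infer_instance
  exact Measure.pi.isFiniteMeasureOnCompacts _

instance isFiniteMeasureOnCompacts_mMeas (β : ℝ) : IsFiniteMeasureOnCompacts (mMeas n β) := by
  refine ⟨fun K hK => ?_⟩
  rw [mMeas, Measure.finsetSum_apply]
  exact ENNReal.sum_lt_top.2 fun B _ =>
    ENNReal.mul_lt_top (by finiteness) hK.measure_lt_top

theorem smul_lamB_le_mMeas (β : ℝ) (B : Finset (Fin n)) :
    ENNReal.ofReal β ^ (n - B.card) • lamB n B ≤ mMeas n β := by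
  refine Measure.le_intro fun s _ _ => ?_
  rw [mMeas, Measure.finsetSum_apply]
  exact Finset.single_le_sum (f := fun C : Finset (Fin n) =>
    (ENNReal.ofReal β ^ (n - C.card) • lamB n C) s) (fun _ _ => zero_le) (Finset.mem_univ B)

theorem muB_le_withDensity_mMeas (β : ℝ) (ϱ : (Fin n → ℝ) → ℝ) (B : Finset (Fin n)) :
    muB n β ϱ B ≤ (mMeas n β).withDensity fun x => ENNReal.ofReal (ϱ x) :=
  withDensity_mono_measure (smul_lamB_le_mMeas β B) _

theorem smul_lamB_restrict_le_muB_restrict {β : ℝ} (hβ : 0 ≤ β) {ϱ : (Fin n → ℝ) → ℝ}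
    {B : Finset (Fin n)} {s : Set (Fin n → ℝ)} (hs : MeasurableSet s) (hsE : s ⊆ Eplus n B)
    {m : ℝ} (hm : ∀ x ∈ s, m ≤ ϱ x) :
    ENNReal.ofReal (β ^ (n - B.card) * m) • (lamB n B).restrict s ≤
      (muB n β ϱ B).restrict (Eplus n B) := by
  calc ENNReal.ofReal (β ^ (n - B.card) * m) • (lamB n B).restrict s
      = ENNReal.ofReal β ^ (n - B.card) • (ENNReal.ofReal m • (lamB n B).restrict s) := by
        rw [ENNReal.ofReal_mul (by positivity), ENNReal.ofReal_pow hβ, smul_smul]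
    _ ≤ ENNReal.ofReal β ^ (n - B.card) •
          ((lamB n B).restrict s).withDensity fun x => ENNReal.ofReal (ϱ x) := by
        gcongr; exact smul_restrict_le_withDensity_ofReal hs hm
    _ = (muB n β ϱ B).restrict s := by
        rw [muB, restrict_withDensity hs, Measure.restrict_smul, withDensity_smul_measure]
    _ ≤ (muB n β ϱ B).restrict (Eplus n B) := Measure.restrict_mono hsE le_rfl

theorem integral_le_energyForm (β : ℝ) (ϱ : (Fin n → ℝ) → ℝ) (f : (Fin n → ℝ) → ℝ)
    {B : Finset (Fin n)} (hB : B ≠ ∅) :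
    ∫ x in Eplus n B, (∑ i ∈ B, pd n i f x ^ 2) ∂(muB n β ϱ B) ≤ energyForm n β ϱ f := by
  rw [energyForm]
  exact Finset.single_le_sum (f := fun C : Finset (Fin n) =>
      ∫ x in Eplus n C, (∑ i ∈ C, pd n i f x ^ 2) ∂(muB n β ϱ C))
    (fun _ _ => integral_nonneg fun _ => Finset.sum_nonneg fun _ _ => sq_nonneg _)
    (by simp [hB])

theorem continuous_pd {f : (Fin n → ℝ) → ℝ} (hf : ContDiff ℝ 1 f) (i : Fin n) :
    Continuous (pd n i f) :=
  (hf.continuous_fderiv one_ne_zero).clm_apply continuous_const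

theorem hasCompactSupport_pd {f : (Fin n → ℝ) → ℝ} (hf : HasCompactSupport f) (i : Fin n) :
    HasCompactSupport (pd n i f) :=
  hf.fderiv_apply ℝ (Pi.single i 1)

theorem stmt7_general (n : ℕ) (β : ℝ) (hβ : 0 < β) (ϱ : (Fin n → ℝ) → ℝ)
    (hϱc : Continuous ϱ)
    (Ω : Set (Fin n → ℝ)) (hΩ : IsCompact (closure Ω))
    (hΩE : closure Ω ⊆ {x ∈ orthE n | 0 < ϱ x}) :
    ∃ ϱm ϱp : ℝ, 0 < ϱm ∧ ϱm ≤ ϱp ∧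
      (∀ x ∈ closure Ω, ϱm ≤ ϱ x ∧ ϱ x ≤ ϱp) ∧
      ∀ B : Finset (Fin n), B ≠ ∅ → (Eplus n B ∩ Ω).Nonempty →
        ∀ f : (Fin n → ℝ) → ℝ, ContDiff ℝ 2 f → HasCompactSupport f →
          (∫ x in Eplus n B ∩ Ω, f x ^ 2 ∂(lamB n B)) +
              (∫ x in Eplus n B ∩ Ω, (∑ i ∈ B, pd n i f x ^ 2) ∂(lamB n B)) ≤
            (β ^ (n - B.card) * ϱm)⁻¹ *
              (energyForm n β ϱ f +
                ∫ x, f x ^ 2 ∂((mMeas n β).withDensity fun x => ENNReal.ofReal (ϱ x))) := by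
  obtain ⟨m, M, hm, hmM, hbounds⟩ :=
    hΩ.exists_bounds_of_continuous_pos hϱc fun x hx => (hΩE hx).2
  refine ⟨m, M, hm, hmM, hbounds, fun B hB _ f hf hfs => ?_⟩
  have hcm : 0 < β ^ (n - B.card) * m := by positivity
  have hsmul : ENNReal.ofReal (β ^ (n - B.card) * m) • (lamB n B).restrict (Eplus n B ∩ Ω) ≤
      (muB n β ϱ B).restrict (Eplus n B) := by
    -- `Ω` need not be measurable, so the lower bound on `ϱ` is used on `E₊(B) ∩ closure Ω`.
    refine le_trans ?_ (smul_lamB_restrict_le_muB_restrict hβ.le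
      ((measurableSet_Eplus B).inter isClosed_closure.measurableSet) inter_subset_left
      fun x hx => (hbounds x hx.2).1)
    gcongr
    exact subset_closure
  set μ := (mMeas n β).withDensity fun x => ENNReal.ofReal (ϱ x)
  have : IsLocallyFiniteMeasure μ := IsLocallyFiniteMeasure.withDensity_ofReal hϱc
  have hmuB : (muB n β ϱ B).restrict (Eplus n B) ≤ μ :=
    Measure.restrict_le_self.trans (muB_le_withDensity_mMeas β ϱ B)
  have hgrad : Integrable (fun x => ∑ i ∈ B, pd n i f x ^ 2) μ :=
    integrable_finsetSum _ fun i _ =>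
      (continuous_pd (hf.of_le (by norm_num)) i).integrable_sq_of_hasCompactSupport
        (hasCompactSupport_pd hfs i)
  have hL2 := integral_le_inv_mul_integral_of_smul_le hcm (hsmul.trans hmuB)
    (ae_of_all _ fun x => sq_nonneg (f x))
    (hf.continuous.integrable_sq_of_hasCompactSupport hfs)
  have hH1 := integral_le_inv_mul_integral_of_smul_le hcm hsmul
    (ae_of_all _ fun x => Finset.sum_nonneg fun i _ => sq_nonneg (pd n i f x))
    (hgrad.mono_measure hmuB)
  have hE := mul_le_mul_of_nonneg_left (integral_le_energyForm β ϱ f hB) (inv_nonneg.2 hcm.le)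
  rw [mul_add]
  linarith

theorem stmt7 (n : ℕ) (β : ℝ) (hβ : 0 < β) (ϱ : (Fin n → ℝ) → ℝ)
    (hϱc : Continuous ϱ) (hϱnn : ∀ x, 0 ≤ ϱ x) (hϱint : Integrable ϱ (mMeas n β))
    (Ω : Set (Fin n → ℝ)) (hΩ : IsCompact (closure Ω))
    (hΩE : closure Ω ⊆ {x ∈ orthE n | 0 < ϱ x}) :
    ∃ ϱm ϱp : ℝ, 0 < ϱm ∧ ϱm ≤ ϱp ∧
      (∀ x ∈ closure Ω, ϱm ≤ ϱ x ∧ ϱ x ≤ ϱp) ∧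
      ∀ B : Finset (Fin n), B ≠ ∅ → (Eplus n B ∩ Ω).Nonempty →
        ∀ f : (Fin n → ℝ) → ℝ, ContDiff ℝ 2 f → HasCompactSupport f →
          (∫ x in Eplus n B ∩ Ω, f x ^ 2 ∂(lamB n B)) +
              (∫ x in Eplus n B ∩ Ω, (∑ i ∈ B, pd n i f x ^ 2) ∂(lamB n B)) ≤
            (β ^ (n - B.card) * ϱm)⁻¹ *
              (energyForm n β ϱ f +
                ∫ x, f x ^ 2 ∂((mMeas n β).withDensity fun x => ENNReal.ofReal (ϱ x))) :=
  stmt7_general n β hβ ϱ hϱc Ω hΩ hΩE
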